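/- arXiv:1501.02430 — 5 statements merged into one kernel-verified Lean document; each statement's English description precedes it below -/
import Mathlib

section
/- For a (k+1)-cycle σ in S_n and a permutation τ in S_n, the length of a shortest factorization of στ into transpositions equals the sum of the shortest factorization lengths of σ and τ (equivalently, n minus the number of cycles is additive: n − c(στ) = k + (n − c(τ))) if and only if the k+1 points moved by σ all lie in distinct cycles of τ. -/
/-!
Let `U` be the union of the `τ`-cycles meeting the support of `σ`. The permutation `σ * τ` maps
`U` into itself and agrees with `τ` off `U`, so each cycle of `σ * τ` lies in `U` or is a `τ`-cycle
outside `U`. If `m` is the number of `τ`-cycles meeting the support, this gives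
`c(στ) ≥ c(τ) - m + 1`, and `m ≤ k + 1` with equality iff the `k + 1` moved points lie in distinct
`τ`-cycles. In that case `σ * τ`, started at `c ∈ supp σ`, runs through the whole `τ`-cycle of `c`
and then jumps to `σ c`; hence `U` is a single cycle of `σ * τ` and `c(στ) = c(τ) - k`.
-/

/-- The number of cycles (including fixed points as 1-cycles) of a permutation of `Fin n`. -/
noncomputable def numCycles {n : ℕ} (σ : Equiv.Perm (Fin n)) : ℕ :=
  σ.cycleType.card + (n - σ.support.card)

open Equiv Finset

namespace Equiv.Perm

variable {α : Type*}

theorem SameCycle.rel_of_forall_rel_apply {f : Perm α} (r : Setoid α) (h : ∀ y, r y (f y))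
    {x y : α} (hxy : f.SameCycle x y) : r x y := by
  obtain ⟨i, rfl⟩ := hxy
  induction i using Int.induction_on with
  | zero => exact r.refl _
  | succ i ih =>
    rw [add_comm, zpow_add, zpow_one, mul_apply]
    exact r.trans ih (h _)
  | pred i ih =>
    rw [sub_eq_neg_add, zpow_add, zpow_neg_one, mul_apply]
    have := h (f⁻¹ ((f ^ (-(i : ℤ))) x))
    rw [show f (f⁻¹ _) = _ from f.apply_symm_apply _] at this
    exact r.trans ih (r.symm this)

theorem ncard_image_mk_sameCycle_eq_iff (τ : Perm α) (s : Finset α) :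
    ((⟦·⟧ : α → Quotient (SameCycle.setoid τ)) '' s).ncard = #s ↔
      (s : Set α).Pairwise fun a b => ¬τ.SameCycle a b := by
  rw [← Set.ncard_coe_finset s, Set.ncard_image_iff]
  simp only [Set.InjOn, Set.Pairwise, Quotient.eq]
  exact forall₂_congr fun a _ => forall₂_congr fun b _ => not_imp_not.symm

variable [Fintype α] [DecidableEq α]

theorem sameCycle_mul_left_apply_of_pairwise {σ τ : Perm α}
    (hτσ : (σ.support : Set α).Pairwise fun a b => ¬τ.SameCycle a b) {c : α}
    (hc : c ∈ σ.support) : (σ * τ).SameCycle c (σ c) := by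
  -- From `y`, `σ * τ` follows `τ` until it reaches `c` (no other point of the `τ`-cycle of `c`
  -- is moved by `σ`), and then jumps to `σ c`.
  have key : ∀ (i : ℕ) (y : α), (τ ^ (i + 1)) y = c → (σ * τ).SameCycle y (σ c) := by
    intro i
    induction i with
    | zero => exact fun y hy => ⟨1, by simp [← hy]⟩
    | succ i ih =>
      intro y hy
      rw [pow_succ _ (i + 1), mul_apply] at hy
      refine sameCycle_apply_left.mp ?_
      by_cases hτy : τ y ∈ σ.support
      · have : τ y = c := by
          by_contra hne
          exact hτσ hτy hc hne ⟨(i + 1 : ℕ), by rwa [zpow_natCast]⟩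
        rw [mul_apply, this]
      · rw [mul_apply, notMem_support.mp hτy]
        exact ih _ hy
  obtain ⟨i, hi⟩ := Nat.exists_eq_add_one_of_ne_zero (orderOf_pos τ).ne'
  exact key i c (by rw [← hi, pow_orderOf_eq_one, one_apply])

theorem sameCycle_mul_right_apply_of_pairwise {σ τ : Perm α}
    (hτσ : (σ.support : Set α).Pairwise fun a b => ¬τ.SameCycle a b) (y : α) :
    (σ * τ).SameCycle y (τ y) := by
  by_cases hτy : τ y ∈ σ.support
  · exact SameCycle.trans ⟨1, rfl⟩ (sameCycle_mul_left_apply_of_pairwise hτσ hτy).symm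
  · exact ⟨1, by simp [notMem_support.mp hτy]⟩

theorem SameCycle.mul_of_pairwise {σ τ : Perm α}
    (hτσ : (σ.support : Set α).Pairwise fun a b => ¬τ.SameCycle a b) {x y : α}
    (h : τ.SameCycle x y) : (σ * τ).SameCycle x y :=
  h.rel_of_forall_rel_apply (SameCycle.setoid _) (sameCycle_mul_right_apply_of_pairwise hτσ)

theorem IsCycle.sameCycle_mul_of_pairwise {σ τ : Perm α} (hσ : σ.IsCycle)
    (hτσ : (σ.support : Set α).Pairwise fun a b => ¬τ.SameCycle a b) {c d : α}
    (hc : c ∈ σ.support) (hd : d ∈ σ.support) : (σ * τ).SameCycle c d := by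
  refine (hσ.sameCycle (mem_support.mp hc) (mem_support.mp hd)).rel_of_forall_rel_apply
    (SameCycle.setoid _) fun y => ?_
  by_cases hy : y ∈ σ.support
  · exact sameCycle_mul_left_apply_of_pairwise hτσ hy
  · rw [notMem_support.mp hy]

/-- The `τ`-cycle of `x`, except that all `τ`-cycles meeting `s` are identified to `none`. -/
def collapseCycles (τ : Perm α) (s : Finset α) (x : α) : Option (Quotient (SameCycle.setoid τ)) :=
  if ∃ c ∈ s, τ.SameCycle c x then none else some ⟦x⟧

theorem collapseCycles_mul_apply (σ τ : Perm α) (y : α) :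
    collapseCycles τ σ.support ((σ * τ) y) = collapseCycles τ σ.support y := by
  by_cases hτy : τ y ∈ σ.support
  · have hy : ∃ c ∈ σ.support, τ.SameCycle c y := ⟨τ y, hτy, sameCycle_apply_left.mpr .rfl⟩
    have hστy : ∃ c ∈ σ.support, τ.SameCycle c ((σ * τ) y) :=
      ⟨σ (τ y), apply_mem_support.mpr hτy, .rfl⟩
    simp only [collapseCycles, if_pos hy, if_pos hστy]
  · rw [mul_apply, notMem_support.mp hτy]
    simp only [collapseCycles, sameCycle_apply_right]
    congr 2
    exact Quotient.sound (sameCycle_apply_left.mpr .rfl)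

theorem SameCycle.collapseCycles_eq {σ τ : Perm α} {x y : α} (h : (σ * τ).SameCycle x y) :
    collapseCycles τ σ.support x = collapseCycles τ σ.support y :=
  h.rel_of_forall_rel_apply (Setoid.ker _) fun y => (collapseCycles_mul_apply σ τ y).symm

theorem IsCycle.sameCycle_mul_iff_collapseCycles_eq {σ τ : Perm α} (hσ : σ.IsCycle)
    (hτσ : (σ.support : Set α).Pairwise fun a b => ¬τ.SameCycle a b) {x y : α} :
    (σ * τ).SameCycle x y ↔ collapseCycles τ σ.support x = collapseCycles τ σ.support y := by
  refine ⟨SameCycle.collapseCycles_eq, fun h => ?_⟩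
  unfold collapseCycles at h
  split_ifs at h with hx hy hy
  · obtain ⟨c, hc, hcx⟩ := hx
    obtain ⟨d, hd, hdy⟩ := hy
    exact (SameCycle.mul_of_pairwise hτσ hcx).symm.trans <|
      (hσ.sameCycle_mul_of_pairwise hτσ hc hd).trans (SameCycle.mul_of_pairwise hτσ hdy)
  · exact SameCycle.mul_of_pairwise hτσ (Quotient.exact (Option.some_injective _ h))

theorem card_range_collapseCycles_add (τ : Perm α) {s : Finset α} (hs : s.Nonempty) :
    Nat.card (Set.range (collapseCycles τ s)) +
        ((⟦·⟧ : α → Quotient (SameCycle.setoid τ)) '' s).ncard =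
      Nat.card (Quotient (SameCycle.setoid τ)) + 1 := by
  set V := (⟦·⟧ : α → Quotient (SameCycle.setoid τ)) '' s
  have hmemV (x : α) : ⟦x⟧ ∈ V ↔ ∃ c ∈ s, τ.SameCycle c x := by
    simp only [V, Set.mem_image, Finset.mem_coe, Quotient.eq]
    rfl
  have hrange : Set.range (collapseCycles τ s) = insert none (some '' Vᶜ) := by
    ext (_ | q)
    · obtain ⟨c, hc⟩ := hs
      simpa using ⟨c, if_pos ⟨c, hc, .rfl⟩⟩
    · induction q using Quotient.inductionOn with | h x => ?_
      simp only [Set.mem_range, Set.mem_insert_iff, reduceCtorEq, false_or,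
        (Option.some_injective _).mem_set_image, Set.mem_compl_iff, hmemV]
      constructor
      · rintro ⟨y, hy⟩
        unfold collapseCycles at hy
        split_ifs at hy with h
        rwa [← hmemV, ← Option.some_injective _ hy, hmemV]
      · exact fun hx => ⟨x, if_neg hx⟩
  rw [hrange, Nat.card_coe_set_eq, Set.ncard_insert_of_notMem (by simp),
    Set.ncard_image_of_injective _ (Option.some_injective _), Set.ncard_compl]
  have := Set.ncard_le_card V
  omega

theorem card_range_collapseCycles_le (σ τ : Perm α) :
    Nat.card (Set.range (collapseCycles τ σ.support)) ≤
      Nat.card (Quotient (SameCycle.setoid (σ * τ))) := by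
  refine Nat.card_le_card_of_surjective
    (Quotient.lift (Set.rangeFactorization _) fun _ _ h => Subtype.ext h.collapseCycles_eq) ?_
  exact Set.rangeFactorization_surjective.of_comp (g := Quotient.mk _)

theorem IsCycle.card_quotient_sameCycle_mul_eq {σ τ : Perm α} (hσ : σ.IsCycle)
    (hτσ : (σ.support : Set α).Pairwise fun a b => ¬τ.SameCycle a b) :
    Nat.card (Quotient (SameCycle.setoid (σ * τ))) =
      Nat.card (Set.range (collapseCycles τ σ.support)) :=
  Nat.card_congr <|
    (Quotient.congrRight fun _ _ => hσ.sameCycle_mul_iff_collapseCycles_eq hτσ).trans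
      (Setoid.quotientKerEquivRange _)

theorem card_quotient_sameCycle (σ : Perm α) :
    Nat.card (Quotient (SameCycle.setoid σ)) =
      σ.cycleType.card + (Fintype.card α - #σ.support) := by
  let f : α → σ.cycleFactorsFinset ⊕ Function.fixedPoints σ := fun x =>
    if hx : σ x = x then .inr ⟨x, hx⟩
    else .inl ⟨σ.cycleOf x, cycleOf_mem_cycleFactorsFinset_iff.mpr (mem_support.mpr hx)⟩
  have hker (x y : α) : σ.SameCycle x y ↔ f x = f y := by
    by_cases hx : σ x = x <;> by_cases hy : σ y = y
    · simp only [f, dif_pos hx, dif_pos hy, Sum.inr.injEq, Subtype.ext_iff]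
      exact ⟨fun h => h.eq_of_left hx, fun h => h ▸ .rfl⟩
    · simp only [f, dif_pos hx, dif_neg hy, reduceCtorEq, iff_false]
      exact fun h => hy (h.eq_of_left hx ▸ hx)
    · simp only [f, dif_neg hx, dif_pos hy, reduceCtorEq, iff_false]
      exact fun h => hx (h.eq_of_right hy ▸ hy)
    · simp [f, hx, hy, sameCycle_iff_cycleOf_eq_of_mem_support (mem_support.mpr hx)
        (mem_support.mpr hy)]
  have hf : f.Surjective := by
    rintro (⟨c, hc⟩ | ⟨x, hx⟩)
    · obtain ⟨x, hx⟩ := (mem_cycleFactorsFinset_iff.mp hc).1.nonempty_support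
      have hxσ := mem_support.mp (mem_cycleFactorsFinset_support_le hc hx)
      exact ⟨x, by simp [f, hxσ, cycle_is_cycleOf hx hc]⟩
    · exact ⟨x, by simp [f, hx.eq]⟩
  rw [Nat.card_congr ((Quotient.congrRight hker).trans (Setoid.quotientKerEquivOfSurjective f hf)),
    Nat.card_sum, Nat.card_eq_fintype_card, Nat.card_eq_fintype_card, card_fixedPoints,
    sum_cycleType]
  simp [cycleType_def]

theorem card_quotient_sameCycle_add_one_le (σ τ : Perm α) (hσ : σ.support.Nonempty) :
    Nat.card (Quotient (SameCycle.setoid τ)) + 1 ≤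
      Nat.card (Quotient (SameCycle.setoid (σ * τ))) +
        ((⟦·⟧ : α → Quotient (SameCycle.setoid τ)) '' σ.support).ncard := by
  have := card_range_collapseCycles_add τ hσ
  have := card_range_collapseCycles_le σ τ
  omega

theorem IsCycle.card_quotient_sameCycle_mul_add_card_support {σ τ : Perm α} (hσ : σ.IsCycle)
    (hτσ : (σ.support : Set α).Pairwise fun a b => ¬τ.SameCycle a b) :
    Nat.card (Quotient (SameCycle.setoid (σ * τ))) + #σ.support =
      Nat.card (Quotient (SameCycle.setoid τ)) + 1 := by
  rw [hσ.card_quotient_sameCycle_mul_eq hτσ,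
    ← (ncard_image_mk_sameCycle_eq_iff τ σ.support).mpr hτσ]
  exact card_range_collapseCycles_add τ hσ.nonempty_support

end Equiv.Perm

open Equiv.Perm

theorem numCycles_eq_card_quotient {n : ℕ} (π : Perm (Fin n)) :
    numCycles π = Nat.card (Quotient (SameCycle.setoid π)) := by
  rw [card_quotient_sameCycle, Fintype.card_fin, numCycles]

theorem numCycles_le {n : ℕ} (π : Perm (Fin n)) : numCycles π ≤ n := by
  rw [numCycles_eq_card_quotient]
  simpa using Nat.card_le_card_of_surjective _ (Quotient.mk_surjective (s := SameCycle.setoid π))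

/-- For a `(k+1)`-cycle `σ` and any `τ` in `S_n`, the degree `n - c(·)` is additive,
`n - c(στ) = k + (n - c(τ))`, iff the `k+1` points moved by `σ` lie in
pairwise distinct cycles of `τ`. -/
theorem stmt1 (n k : ℕ) (σ τ : Equiv.Perm (Fin n)) (hσ : σ.IsCycle)
    (hcard : σ.support.card = k + 1) :
    n - numCycles (σ * τ) = k + (n - numCycles τ) ↔
      ∀ a ∈ σ.support, ∀ b ∈ σ.support, a ≠ b → ¬ τ.SameCycle a b := by
  have hστ := numCycles_le (σ * τ)
  have hτ := numCycles_le τ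
  have hcycles := card_quotient_sameCycle_add_one_le σ τ hσ.nonempty_support
  have himage : ((⟦·⟧ : Fin n → Quotient (SameCycle.setoid τ)) '' σ.support).ncard ≤ k + 1 :=
    hcard ▸ Set.ncard_coe_finset σ.support ▸ Set.ncard_image_le
  simp only [← numCycles_eq_card_quotient] at hcycles
  constructor
  · intro h
    by_contra hτσ
    have := (ncard_image_mk_sameCycle_eq_iff τ σ.support).not.mpr hτσ
    omega
  · intro hτσ
    have := hσ.card_quotient_sameCycle_mul_add_card_support hτσ
    simp only [← numCycles_eq_card_quotient] at this
    omega
end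

section
/- The ring of MacMahon symmetric functions S (the inverse limit of the rings ℂ[x₁,...,x_n,y₁,...,y_n]^{S_n} under the maps setting the last pair of variables to zero) is a polynomial ring freely generated by the power-sum-type monomial symmetric functions m_{(a,b)} for (a,b) ∈ ℕ×ℕ \ {(0,0)}. -/
/-- The monomial MacMahon symmetric function `m_Λ` attached to a bipartite partition
`Λ` (a multiset of vectors in `ℕ×ℕ`), as a formal power series in two families of
variables `xᵢ = X (i,0)`, `yᵢ = X (i,1)`: the sum, with coefficients `0` or `1`, of all
monomials whose multiset of exponent pairs equals `Λ`. -/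
noncomputable def mm (Λ : Multiset (ℕ × ℕ)) : MvPowerSeries (ℕ × Fin 2) ℂ :=
  fun d => if (d.support.image Prod.fst).val.map
      (fun i => (d (i, 0), d (i, 1))) = Λ then 1 else 0

/-!
Write `p_Λ` for the product of the power sums `m_{v}` over the parts `v` of `Λ`. Expanding
`m_{v} * m_M` monomial by monomial shows that its coefficient at a monomial depends only on the
monomial's bipartite partition, and that the only partition with more parts than `M` occurring
in it is `v :: M`, with a positive coefficient. By induction, `p_Λ = c • m_Λ + r` with `c > 0`
and `r` a combination of `m_μ` with fewer parts than `Λ`. This triangularity gives both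
claims: by induction on the number of parts every `m_Λ` is a polynomial in the power sums, and
in a polynomial relation among the power sums, the coefficient of a monomial of shape `Λ`, for
`Λ` of maximal length among the occurring `p_Λ`, isolates the coefficient of `p_Λ`.
-/

namespace MacMahon

open MvPowerSeries

def pairAt (d : ℕ × Fin 2 →₀ ℕ) (i : ℕ) : ℕ × ℕ := (d (i, 0), d (i, 1))

def indices (d : ℕ × Fin 2 →₀ ℕ) : Finset ℕ := d.support.image Prod.fst

def shape (d : ℕ × Fin 2 →₀ ℕ) : Multiset (ℕ × ℕ) := (indices d).val.map (pairAt d)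

theorem coeff_mm (Λ : Multiset (ℕ × ℕ)) (d : ℕ × Fin 2 →₀ ℕ) :
    coeff d (mm Λ) = if shape d = Λ then 1 else 0 := rfl

theorem pairAt_add (d d' : ℕ × Fin 2 →₀ ℕ) (i : ℕ) :
    pairAt (d + d') i = pairAt d i + pairAt d' i := rfl

theorem pairAt_sub (d d' : ℕ × Fin 2 →₀ ℕ) (i : ℕ) :
    pairAt (d - d') i = pairAt d i - pairAt d' i := rfl

theorem ext_pairAt {d d' : ℕ × Fin 2 →₀ ℕ} (h : ∀ i, pairAt d i = pairAt d' i) : d = d' := by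
  ext ⟨i, k⟩
  fin_cases k
  exacts [congrArg Prod.fst (h i), congrArg Prod.snd (h i)]

theorem mem_indices {d : ℕ × Fin 2 →₀ ℕ} {i : ℕ} : i ∈ indices d ↔ pairAt d i ≠ 0 := by
  simp only [indices, Finset.mem_image, Finsupp.mem_support_iff, Prod.exists, exists_and_right,
    exists_eq_right, Fin.exists_fin_two, pairAt, ne_eq, Prod.mk_eq_zero, not_and_or]

theorem mem_indices_of_le {i : ℕ} {v : ℕ × ℕ} {d : ℕ × Fin 2 →₀ ℕ} (hv : v ≠ 0)
    (hle : v ≤ pairAt d i) : i ∈ indices d :=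
  mem_indices.2 fun h => hv (le_antisymm (h ▸ hle) bot_le)

theorem card_shape (d : ℕ × Fin 2 →₀ ℕ) : Multiset.card (shape d) = (indices d).card :=
  Multiset.card_map _ _

theorem zero_notMem_shape (d : ℕ × Fin 2 →₀ ℕ) : (0 : ℕ × ℕ) ∉ shape d := by
  simp only [shape, Multiset.mem_map, Finset.mem_val, not_exists, not_and]
  exact fun i hi h0 => mem_indices.1 hi h0

theorem shape_eq_zero_iff {d : ℕ × Fin 2 →₀ ℕ} : shape d = 0 ↔ d = 0 := by
  rw [shape, Multiset.map_eq_zero, Finset.val_eq_zero, indices, Finset.image_eq_empty,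
    Finsupp.support_eq_empty]

def nonzeroPart (v : ℕ × ℕ) : Multiset (ℕ × ℕ) := if v = 0 then 0 else {v}

theorem shape_eq_sum {d : ℕ × Fin 2 →₀ ℕ} {s : Finset ℕ} (hs : indices d ⊆ s) :
    shape d = ∑ i ∈ s, nonzeroPart (pairAt d i) := by
  rw [← Finset.sum_subset hs fun i _ hi => by simp [nonzeroPart, mem_indices.not_left.1 hi]]
  have h : ∀ i ∈ indices d, nonzeroPart (pairAt d i) = {pairAt d i} :=
    fun i hi => if_neg (mem_indices.1 hi)
  rw [Finset.sum_congr rfl h, Finset.sum_eq_multiset_sum,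
    ← Multiset.sum_map_singleton (shape d), shape, Multiset.map_map]
  rfl

theorem shape_add_nonzeroPart {d d' : ℕ × Fin 2 →₀ ℕ} {i : ℕ}
    (h : ∀ j ≠ i, pairAt d' j = pairAt d j) :
    shape d' + nonzeroPart (pairAt d i) = shape d + nonzeroPart (pairAt d' i) := by
  set s := insert i (indices d ∪ indices d')
  have hi : i ∈ s := Finset.mem_insert_self _ _
  rw [shape_eq_sum (s := s) (fun j hj => by simp [s, hj]),
    shape_eq_sum (s := s) (fun j hj => by simp [s, hj]), ← Finset.add_sum_erase s _ hi,
    ← Finset.add_sum_erase s _ hi,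
    Finset.sum_congr rfl fun j hj => by rw [h j (Finset.ne_of_mem_erase hj)]]
  abel

theorem le_iff_pairAt_le {d d' : ℕ × Fin 2 →₀ ℕ} : d ≤ d' ↔ ∀ i, pairAt d i ≤ pairAt d' i := by
  simp only [Finsupp.le_def, Prod.forall, Fin.forall_fin_two, pairAt, Prod.mk_le_mk, forall_and]

noncomputable def singlePair (i : ℕ) (v : ℕ × ℕ) : ℕ × Fin 2 →₀ ℕ :=
  Finsupp.single (i, 0) v.1 + Finsupp.single (i, 1) v.2

theorem pairAt_singlePair (i : ℕ) (v : ℕ × ℕ) (j : ℕ) :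
    pairAt (singlePair i v) j = if j = i then v else 0 := by
  by_cases h : j = i <;> simp [pairAt, singlePair, h]

theorem singlePair_le_iff {i : ℕ} {v : ℕ × ℕ} {d : ℕ × Fin 2 →₀ ℕ} :
    singlePair i v ≤ d ↔ v ≤ pairAt d i := by
  simp only [le_iff_pairAt_le, pairAt_singlePair]
  refine ⟨fun h => by simpa using h i, fun h j => ?_⟩
  split_ifs with hj
  exacts [hj ▸ h, bot_le]

theorem shape_singlePair_add {i : ℕ} {v : ℕ × ℕ} {d : ℕ × Fin 2 →₀ ℕ} (hv : v ≠ 0)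
    (hi : i ∉ indices d) : shape (singlePair i v + d) = v ::ₘ shape d := by
  have hdi : pairAt d i = 0 := not_not.1 (mem_indices.not.1 hi)
  have h := shape_add_nonzeroPart (d := d) (d' := singlePair i v + d) (i := i) fun j hj => by
    simp [pairAt_add, pairAt_singlePair, hj]
  rw [pairAt_add, pairAt_singlePair, if_pos rfl, hdi, add_zero, nonzeroPart, nonzeroPart,
    if_pos rfl, if_neg hv, add_zero] at h
  rw [h, add_comm, Multiset.singleton_add]

theorem shape_singlePair {v : ℕ × ℕ} (hv : v ≠ 0) (i : ℕ) : shape (singlePair i v) = {v} := by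
  simpa [indices, shape_eq_zero_iff.2] using
    shape_singlePair_add (d := 0) (i := i) hv (by simp [indices])

theorem exists_shape_eq {μ : Multiset (ℕ × ℕ)} (hμ : (0 : ℕ × ℕ) ∉ μ) :
    ∃ d, shape d = μ := by
  induction μ using Multiset.induction_on with
  | empty => exact ⟨0, shape_eq_zero_iff.2 rfl⟩
  | cons v μ ih =>
    obtain ⟨d, rfl⟩ := ih fun h => hμ (Multiset.mem_cons_of_mem h)
    obtain ⟨i, hi⟩ := Infinite.exists_notMem_finset (indices d)
    exact ⟨singlePair i v + d,
      shape_singlePair_add (fun h => hμ (h ▸ Multiset.mem_cons_self _ _)) hi⟩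

theorem shape_sub_singlePair {i : ℕ} {v : ℕ × ℕ} {d : ℕ × Fin 2 →₀ ℕ} (hv : v ≠ 0)
    (hle : v ≤ pairAt d i) :
    shape (d - singlePair i v) = (shape d).erase (pairAt d i) + nonzeroPart (pairAt d i - v) := by
  have hi := mem_indices_of_le hv hle
  have hw : pairAt d i ≠ 0 := mem_indices.1 hi
  have hmem : pairAt d i ∈ shape d := Multiset.mem_map_of_mem _ hi
  have h := shape_add_nonzeroPart (d := d) (d' := d - singlePair i v) (i := i) fun j hj => by
    simp [pairAt_sub, pairAt_singlePair, hj]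
  rw [nonzeroPart, if_neg hw, pairAt_sub, pairAt_singlePair, if_pos rfl] at h
  rw [← Multiset.erase_add_left_pos _ hmem, ← h,
    Multiset.erase_add_right_pos _ (Multiset.mem_singleton_self _), Multiset.erase_singleton,
    add_zero]

theorem shape_eq_singleton_iff {v : ℕ × ℕ} (hv : v ≠ 0) {d : ℕ × Fin 2 →₀ ℕ} :
    shape d = {v} ↔ ∃ i, d = singlePair i v := by
  refine ⟨fun h => ?_, fun ⟨i, hi⟩ => hi ▸ shape_singlePair hv i⟩
  obtain ⟨i, hi⟩ := Finset.card_eq_one.1 ((card_shape d).symm.trans (by rw [h]; rfl))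
  have hdi : pairAt d i = v := by
    rw [shape, hi] at h
    exact Multiset.singleton_inj.1 h
  refine ⟨i, ext_pairAt fun j => ?_⟩
  rw [pairAt_singlePair]
  split_ifs with hj
  · rw [hj, hdi]
  · exact not_not.1 fun h => hj (Finset.mem_singleton.1 (hi ▸ mem_indices.2 h))

theorem singlePair_left_injective {v : ℕ × ℕ} (hv : v ≠ 0) :
    Function.Injective (singlePair · v) := by
  intro i j h
  have := congrArg (pairAt · i) h
  simp only [pairAt_singlePair] at this
  by_contra hij
  exact hv (this.trans (if_neg hij))

theorem coeff_mm_singleton_mul {v : ℕ × ℕ} (hv : v ≠ 0) (F : MvPowerSeries (ℕ × Fin 2) ℂ)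
    (d : ℕ × Fin 2 →₀ ℕ) :
    coeff d (mm {v} * F) =
      ∑ i ∈ (indices d).filter (v ≤ pairAt d ·), coeff (d - singlePair i v) F := by
  classical
  rw [coeff_mul]
  simp only [coeff_mm, ite_mul, one_mul, zero_mul]
  rw [← Finset.sum_filter]
  symm
  refine Finset.sum_bij (fun i _ => (singlePair i v, d - singlePair i v)) ?_ ?_ ?_ ?_
  · intro i hi
    rw [Finset.mem_filter] at hi ⊢
    exact ⟨Finset.HasAntidiagonal.mem_antidiagonal.2
      (add_tsub_cancel_of_le (singlePair_le_iff.2 hi.2)), shape_singlePair hv i⟩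
  · exact fun i _ j _ h => singlePair_left_injective hv (congrArg Prod.fst h)
  · rintro ⟨p₁, p₂⟩ hp
    rw [Finset.mem_filter, Finset.HasAntidiagonal.mem_antidiagonal] at hp
    obtain ⟨hsum, hshape⟩ := hp
    obtain ⟨i, rfl⟩ := (shape_eq_singleton_iff hv).1 hshape
    have hle : v ≤ pairAt d i := singlePair_le_iff.1 (hsum ▸ le_self_add)
    refine ⟨i, Finset.mem_filter.2 ⟨mem_indices_of_le hv hle, hle⟩, ?_⟩
    rw [← hsum, add_tsub_cancel_left]
  · exact fun _ _ => rfl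

/-- The coefficient of `m_μ` in `m_{v} * m_M`: the number of parts `w ≥ v` of `μ` whose
reduction to `w - v` (deleted if zero) turns `μ` into `M`. -/
def mulCoeff (v : ℕ × ℕ) (M μ : Multiset (ℕ × ℕ)) : ℕ :=
  μ.countP fun w => v ≤ w ∧ μ.erase w + nonzeroPart (w - v) = M

theorem coeff_mm_singleton_mul_mm {v : ℕ × ℕ} (hv : v ≠ 0) (M : Multiset (ℕ × ℕ))
    (d : ℕ × Fin 2 →₀ ℕ) : coeff d (mm {v} * mm M) = mulCoeff v M (shape d) := by
  rw [coeff_mm_singleton_mul hv]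
  have h : ∀ i ∈ (indices d).filter (v ≤ pairAt d ·), coeff (d - singlePair i v) (mm M) =
      if (shape d).erase (pairAt d i) + nonzeroPart (pairAt d i - v) = M then 1 else 0 :=
    fun i hi => by rw [coeff_mm, shape_sub_singlePair hv (Finset.mem_filter.1 hi).2]
  rw [Finset.sum_congr rfl h, Finset.sum_boole, Finset.filter_filter, mulCoeff, shape,
    Multiset.countP_map]
  rfl

theorem eq_sum_smul_mm {F : MvPowerSeries (ℕ × Fin 2) ℂ} {f : Multiset (ℕ × ℕ) → ℂ}
    (S : Finset (Multiset (ℕ × ℕ))) (hF : ∀ d, coeff d F = f (shape d))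
    (hS : ∀ d, shape d ∉ S → f (shape d) = 0) : F = ∑ μ ∈ S, f μ • mm μ := by
  ext d
  simp only [hF, map_sum, map_smul, coeff_mm, smul_eq_mul, mul_ite, mul_one, mul_zero,
    Finset.sum_ite_eq]
  split_ifs with hd
  exacts [rfl, hS d hd]

def mulSupport (v : ℕ × ℕ) (M : Multiset (ℕ × ℕ)) : Finset (Multiset (ℕ × ℕ)) :=
  insert (v ::ₘ M) (M.toFinset.image fun u => (u + v) ::ₘ M.erase u)

theorem mem_mulSupport_of_mulCoeff_ne_zero {v : ℕ × ℕ} {M μ : Multiset (ℕ × ℕ)}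
    (h : mulCoeff v M μ ≠ 0) : μ ∈ mulSupport v M := by
  obtain ⟨w, hw, hvw, rfl⟩ := Multiset.countP_pos.1 (Nat.pos_of_ne_zero h)
  rw [mulSupport, Finset.mem_insert, Finset.mem_image]
  by_cases hwv : w = v
  · left
    rw [hwv, tsub_self, nonzeroPart, if_pos rfl, add_zero, ← hwv, Multiset.cons_erase hw]
  · right
    have hu : w - v ≠ 0 := fun h => hwv (le_antisymm (tsub_eq_zero_iff_le.1 h) hvw)
    rw [nonzeroPart, if_neg hu]
    refine ⟨w - v, by simp, ?_⟩
    rw [tsub_add_cancel_of_le hvw, Multiset.erase_add_right_pos _ (Multiset.mem_singleton_self _),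
      Multiset.erase_singleton, add_zero, Multiset.cons_erase hw]

theorem mm_singleton_mul_mm {v : ℕ × ℕ} (hv : v ≠ 0) (M : Multiset (ℕ × ℕ)) :
    mm {v} * mm M = ∑ μ ∈ mulSupport v M, (mulCoeff v M μ : ℂ) • mm μ :=
  eq_sum_smul_mm _ (fun d => by rw [coeff_mm_singleton_mul_mm hv]) fun _ hd => by
    rw [Nat.cast_eq_zero]
    exact not_not.1 (mt mem_mulSupport_of_mulCoeff_ne_zero hd)

def shorterSpan (n : ℕ) : Submodule ℂ (MvPowerSeries (ℕ × Fin 2) ℂ) :=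
  Submodule.span ℂ (mm '' {μ | Multiset.card μ < n})

theorem mm_mem_shorterSpan {μ : Multiset (ℕ × ℕ)} {n : ℕ} (h : Multiset.card μ < n) :
    mm μ ∈ shorterSpan n :=
  Submodule.subset_span ⟨μ, h, rfl⟩

theorem shorterSpan_mono : Monotone shorterSpan :=
  fun _ _ hmn => Submodule.span_mono (Set.image_mono fun _ h => lt_of_lt_of_le h hmn)

theorem coeff_eq_zero_of_mem_shorterSpan {n : ℕ} {d : ℕ × Fin 2 →₀ ℕ}
    (hn : n ≤ Multiset.card (shape d)) {x : MvPowerSeries (ℕ × Fin 2) ℂ}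
    (hx : x ∈ shorterSpan n) : coeff d x = 0 := by
  refine (Submodule.span_le (p := LinearMap.ker (coeff d))).2 ?_ hx
  rintro _ ⟨μ, hμ, rfl⟩
  rw [SetLike.mem_coe, LinearMap.mem_ker, coeff_mm, if_neg]
  rintro rfl
  exact (lt_of_lt_of_le hμ hn).false

theorem mm_singleton_mul_mm_sub_mem {v : ℕ × ℕ} (hv : v ≠ 0) (M : Multiset (ℕ × ℕ)) :
    ∃ c : ℕ, 0 < c ∧
      mm {v} * mm M - (c : ℂ) • mm (v ::ₘ M) ∈ shorterSpan (Multiset.card M + 1) := by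
  have hcard : ∀ u ∈ M.toFinset, Multiset.card ((u + v) ::ₘ M.erase u) = Multiset.card M :=
    fun u hu => by
      rw [Multiset.card_cons, Multiset.card_erase_add_one (Multiset.mem_toFinset.1 hu)]
  have hnotMem : v ::ₘ M ∉ M.toFinset.image fun u => (u + v) ::ₘ M.erase u := by
    simp only [Finset.mem_image, not_exists, not_and]
    intro u hu h
    simpa [hcard u hu] using congrArg Multiset.card h
  refine ⟨mulCoeff v M (v ::ₘ M), Multiset.countP_pos.2 ⟨v, Multiset.mem_cons_self _ _, le_rfl,
    by simp [nonzeroPart]⟩, ?_⟩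
  rw [mm_singleton_mul_mm hv, mulSupport, Finset.sum_insert hnotMem, add_sub_cancel_left]
  refine Submodule.sum_mem _ fun μ hμ => Submodule.smul_mem _ _ (mm_mem_shorterSpan ?_)
  obtain ⟨u, hu, rfl⟩ := Finset.mem_image.1 hμ
  rw [hcard u hu]
  exact Nat.lt_succ_self _

theorem mm_singleton_mul_mem_shorterSpan {v : ℕ × ℕ} (hv : v ≠ 0) {n : ℕ}
    {x : MvPowerSeries (ℕ × Fin 2) ℂ} (hx : x ∈ shorterSpan n) :
    mm {v} * x ∈ shorterSpan (n + 1) := by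
  induction hx using Submodule.span_induction with
  | mem _ h =>
    obtain ⟨μ, hμ, rfl⟩ := h
    obtain ⟨c, -, hc⟩ := mm_singleton_mul_mm_sub_mem hv μ
    rw [← sub_add_cancel (mm {v} * mm μ) ((c : ℂ) • mm (v ::ₘ μ))]
    refine add_mem (shorterSpan_mono (Nat.succ_le_succ hμ.le) hc)
      (Submodule.smul_mem _ _ (mm_mem_shorterSpan ?_))
    rw [Multiset.card_cons]
    exact Nat.succ_lt_succ hμ
  | zero => simp
  | add x y _ _ hx hy => simpa [mul_add] using add_mem hx hy
  | smul a x _ hx => simpa [mul_smul_comm] using Submodule.smul_mem _ a hx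

theorem mm_zero : mm 0 = 1 := by
  ext d
  rw [coeff_mm, coeff_one]
  exact if_congr shape_eq_zero_iff rfl rfl

theorem mm_eq_zero {Λ : Multiset (ℕ × ℕ)} (h : (0 : ℕ × ℕ) ∈ Λ) : mm Λ = 0 := by
  ext d
  rw [coeff_mm, map_zero, if_neg]
  rintro rfl
  exact zero_notMem_shape d h

noncomputable def powerSumProd (Λ : Multiset (ℕ × ℕ)) : MvPowerSeries (ℕ × Fin 2) ℂ :=
  (Λ.map fun v => mm {v}).prod

theorem powerSumProd_sub_smul_mm_mem {Λ : Multiset (ℕ × ℕ)} (hΛ : (0 : ℕ × ℕ) ∉ Λ) :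
    ∃ c : ℕ, 0 < c ∧ powerSumProd Λ - (c : ℂ) • mm Λ ∈ shorterSpan (Multiset.card Λ) := by
  induction Λ using Multiset.induction_on with
  | empty => exact ⟨1, one_pos, by simp [powerSumProd, mm_zero]⟩
  | cons v Λ ih =>
    have hv : v ≠ 0 := fun h => hΛ (h ▸ Multiset.mem_cons_self _ _)
    obtain ⟨c, hc, hcΛ⟩ := ih fun h => hΛ (Multiset.mem_cons_of_mem h)
    obtain ⟨b, hb, hbΛ⟩ := mm_singleton_mul_mm_sub_mem hv Λ
    refine ⟨c * b, Nat.mul_pos hc hb, ?_⟩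
    have h : powerSumProd (v ::ₘ Λ) - ((c * b : ℕ) : ℂ) • mm (v ::ₘ Λ) =
        mm {v} * (powerSumProd Λ - (c : ℂ) • mm Λ) +
          (c : ℂ) • (mm {v} * mm Λ - (b : ℂ) • mm (v ::ₘ Λ)) := by
      simp only [powerSumProd, Multiset.map_cons, Multiset.prod_cons, mul_sub, mul_smul_comm,
        smul_sub, smul_smul, Nat.cast_mul]
      abel
    rw [h, Multiset.card_cons]
    exact add_mem (mm_singleton_mul_mem_shorterSpan hv hcΛ) (Submodule.smul_mem _ _ hbΛ)

theorem coeff_powerSumProd {Λ : Multiset (ℕ × ℕ)} (hΛ : (0 : ℕ × ℕ) ∉ Λ) :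
    ∃ c : ℂ, c ≠ 0 ∧ ∀ d, Multiset.card Λ ≤ Multiset.card (shape d) →
      coeff d (powerSumProd Λ) = if shape d = Λ then c else 0 := by
  obtain ⟨c, hc, hcΛ⟩ := powerSumProd_sub_smul_mm_mem hΛ
  refine ⟨c, Nat.cast_ne_zero.2 hc.ne', fun d hd => ?_⟩
  rw [← sub_add_cancel (powerSumProd Λ) ((c : ℂ) • mm Λ), map_add,
    coeff_eq_zero_of_mem_shorterSpan hd hcΛ, zero_add, map_smul, coeff_mm, smul_eq_mul, mul_ite,
    mul_one, mul_zero]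

noncomputable def powerSum (v : {v : ℕ × ℕ // v ≠ (0, 0)}) : MvPowerSeries (ℕ × Fin 2) ℂ :=
  mm {(v : ℕ × ℕ)}

noncomputable def partOf (k : {v : ℕ × ℕ // v ≠ (0, 0)} →₀ ℕ) : Multiset (ℕ × ℕ) :=
  k.toMultiset.map Subtype.val

theorem partOf_injective : Function.Injective partOf := fun _ _ h => by
  classical
  simpa using congrArg Multiset.toFinsupp (Multiset.map_injective Subtype.val_injective h)

theorem zero_notMem_partOf (k : {v : ℕ × ℕ // v ≠ (0, 0)} →₀ ℕ) : (0 : ℕ × ℕ) ∉ partOf k := by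
  simp only [partOf, Multiset.mem_map, not_exists, not_and]
  exact fun v _ h => v.2 h

theorem prod_pow_powerSum (k : {v : ℕ × ℕ // v ≠ (0, 0)} →₀ ℕ) :
    (k.prod fun v n => powerSum v ^ n) = powerSumProd (partOf k) := by
  rw [powerSumProd, partOf, Multiset.map_map, ← Finsupp.prod_mapDomain_index pow_zero pow_add,
    ← Finsupp.prod_toMultiset, ← Finsupp.toMultiset_map]
  rfl

theorem aeval_powerSum_eq_sum (p : MvPolynomial {v : ℕ × ℕ // v ≠ (0, 0)} ℂ) :
    MvPolynomial.aeval powerSum p =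
      ∑ k ∈ p.support, MvPolynomial.coeff k p • powerSumProd (partOf k) := by
  conv_lhs => rw [p.as_sum]
  simp only [map_sum, MvPolynomial.aeval_monomial, prod_pow_powerSum, Algebra.smul_def]

theorem algebraicIndependent_powerSum : AlgebraicIndependent ℂ powerSum := by
  rw [algebraicIndependent_iff]
  intro p hp
  by_contra hne
  obtain ⟨k₀, hk₀, hmax⟩ := p.support.exists_max_image (Multiset.card ∘ partOf)
    (MvPolynomial.support_nonempty.2 hne)
  obtain ⟨d, hd⟩ := exists_shape_eq (zero_notMem_partOf k₀)
  obtain ⟨c, hc, hcoeff⟩ := coeff_powerSumProd (zero_notMem_partOf k₀)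
  have hcoeff_d : coeff d (MvPolynomial.aeval powerSum p) = MvPolynomial.coeff k₀ p * c := by
    rw [aeval_powerSum_eq_sum, map_sum, Finset.sum_eq_single_of_mem k₀ hk₀]
    · rw [map_smul, hcoeff d (hd ▸ le_rfl), if_pos hd, smul_eq_mul]
    · intro k hk hk₀
      obtain ⟨_, -, hcoeff'⟩ := coeff_powerSumProd (zero_notMem_partOf k)
      rw [map_smul, hcoeff' d (hd ▸ hmax k hk), hd,
        if_neg fun h => hk₀ (partOf_injective h.symm), smul_zero]
  rw [hp, map_zero] at hcoeff_d
  exact mul_ne_zero (MvPolynomial.mem_support_iff.1 hk₀) hc hcoeff_d.symm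

theorem shorterSpan_le_span (n : ℕ) :
    shorterSpan n ≤ Submodule.span ℂ {x | ∃ Λ : Multiset (ℕ × ℕ), (0, 0) ∉ Λ ∧ x = mm Λ} := by
  refine Submodule.span_le.2 ?_
  rintro _ ⟨μ, -, rfl⟩
  by_cases h0 : (0 : ℕ × ℕ) ∈ μ
  · rw [mm_eq_zero h0]
    exact zero_mem _
  · exact Submodule.subset_span ⟨μ, h0, rfl⟩

theorem adjoin_powerSum_le_span :
    Subalgebra.toSubmodule (Algebra.adjoin ℂ (Set.range powerSum)) ≤
      Submodule.span ℂ {x | ∃ Λ : Multiset (ℕ × ℕ), (0, 0) ∉ Λ ∧ x = mm Λ} := by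
  rw [Algebra.adjoin_range_eq_range_aeval]
  rintro _ ⟨p, rfl⟩
  change MvPolynomial.aeval powerSum p ∈ _
  rw [aeval_powerSum_eq_sum]
  refine Submodule.sum_mem _ fun k _ => Submodule.smul_mem _ _ ?_
  obtain ⟨c, -, hc⟩ := powerSumProd_sub_smul_mm_mem (zero_notMem_partOf k)
  rw [← sub_add_cancel (powerSumProd (partOf k)) ((c : ℂ) • mm (partOf k))]
  exact add_mem (shorterSpan_le_span _ hc)
    (Submodule.smul_mem _ _ (Submodule.subset_span ⟨_, zero_notMem_partOf k, rfl⟩))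

theorem powerSumProd_mem_adjoin (Λ : Multiset (ℕ × ℕ)) (hΛ : (0 : ℕ × ℕ) ∉ Λ) :
    powerSumProd Λ ∈ Algebra.adjoin ℂ (Set.range powerSum) :=
  multiset_prod_mem _ fun _ h => by
    obtain ⟨v, hv, rfl⟩ := Multiset.mem_map.1 h
    exact Algebra.subset_adjoin ⟨⟨v, fun h0 => hΛ (by rwa [h0] at hv)⟩, rfl⟩

theorem shorterSpan_le_adjoin (n : ℕ) :
    shorterSpan n ≤ Subalgebra.toSubmodule (Algebra.adjoin ℂ (Set.range powerSum)) := by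
  induction n with
  | zero =>
    refine Submodule.span_le.2 ?_
    rintro _ ⟨μ, hμ, rfl⟩
    exact absurd hμ (Nat.not_lt_zero _)
  | succ n ih =>
    refine Submodule.span_le.2 ?_
    rintro _ ⟨μ, hμ, rfl⟩
    by_cases h0 : (0 : ℕ × ℕ) ∈ μ
    · rw [mm_eq_zero h0]
      exact zero_mem _
    obtain ⟨c, hc, hcμ⟩ := powerSumProd_sub_smul_mm_mem h0
    have hmm : mm μ = (c : ℂ)⁻¹ • (powerSumProd μ - (powerSumProd μ - (c : ℂ) • mm μ)) := by
      rw [sub_sub_cancel, smul_smul, inv_mul_cancel₀ (Nat.cast_ne_zero.2 hc.ne'), one_smul]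
    rw [SetLike.mem_coe, hmm]
    exact Submodule.smul_mem _ _ (sub_mem (powerSumProd_mem_adjoin μ h0)
      (ih (shorterSpan_mono (Nat.lt_succ_iff.1 hμ) hcμ)))

theorem span_le_adjoin_powerSum :
    Submodule.span ℂ {x | ∃ Λ : Multiset (ℕ × ℕ), (0, 0) ∉ Λ ∧ x = mm Λ} ≤
      Subalgebra.toSubmodule (Algebra.adjoin ℂ (Set.range powerSum)) := by
  refine Submodule.span_le.2 ?_
  rintro _ ⟨Λ, -, rfl⟩
  exact shorterSpan_le_adjoin _ (mm_mem_shorterSpan (Nat.lt_succ_self _))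

end MacMahon

/-- The ring of MacMahon symmetric functions `S` (the span of all monomial symmetric
functions `m_Λ`) is a polynomial ring freely generated by the `m_{(a,b)}`,
`(a,b) ≠ (0,0)`: these elements are algebraically independent over `ℂ` and the
subalgebra they generate coincides, as a submodule, with the span of all `m_Λ`. -/
theorem stmt4 :
    AlgebraicIndependent ℂ
      (fun p : {v : ℕ × ℕ // v ≠ (0, 0)} => mm {(p : ℕ × ℕ)}) ∧
    Subalgebra.toSubmodule
        (Algebra.adjoin ℂ
          (Set.range (fun p : {v : ℕ × ℕ // v ≠ (0, 0)} => mm {(p : ℕ × ℕ)}))) =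
      Submodule.span ℂ {x | ∃ Λ : Multiset (ℕ × ℕ), (0, 0) ∉ Λ ∧ x = mm Λ} :=
  ⟨MacMahon.algebraicIndependent_powerSum,
    le_antisymm MacMahon.adjoin_powerSum_le_span MacMahon.span_le_adjoin_powerSum⟩
end

section
/- Define for partitions μ = (1^{β₁}2^{β₂}...), ν = (1^{γ₁}2^{γ₂}...) and integer x ≥ |ν| the quantity f^μ_ν(x) = (x−|ν|)! (x−|μ|+1) / ( (x−|ν|−ℓ(ν)+ℓ(μ)+1)! · ∏ᵢ (γᵢ−βᵢ)! ), with the convention 1/x! = 0 for x < 0. Then f^μ_ν(x+1) − f^μ_ν(x) = Σⱼ f^{μ∪j}_ν(x), where μ∪j is μ with one additional part equal to j. -/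
/-- `invFact z` is `1/z!` with the convention that `1/z! = 0` for `z < 0`. -/
noncomputable def invFact (z : ℤ) : ℂ :=
  if z < 0 then 0 else ((Nat.factorial z.toNat : ℂ))⁻¹

lemma invFact_shift (z : ℤ) : invFact z = ((z : ℂ) + 1) * invFact (z + 1) := by
  rcases lt_trichotomy z (-1) with h | h | h
  · rw [invFact, invFact, if_pos (by omega), if_pos (by omega), mul_zero]
  · subst h; simp [invFact]
  · have hz : 0 ≤ z := by omega
    rw [invFact, invFact, if_neg (by omega), if_neg (by omega)]
    have h1 : (z + 1).toNat = z.toNat + 1 := by omega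
    rw [h1, Nat.factorial_succ]
    have h2 : ((z.toNat : ℂ)) = (z : ℂ) := by
      have := Int.toNat_of_nonneg hz
      exact_mod_cast congrArg (Int.cast : ℤ → ℂ) this
    have hne : (z : ℂ) + 1 ≠ 0 := by
      rw [← h2]
      have : ((z.toNat : ℂ)) + 1 = ((z.toNat + 1 : ℕ) : ℂ) := by push_cast; ring
      rw [this]
      exact_mod_cast Nat.succ_ne_zero z.toNat
    have hf : (Nat.factorial z.toNat : ℂ) ≠ 0 := by
      exact_mod_cast (Nat.factorial_pos z.toNat).ne'
    push_cast
    rw [h2]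
    field_simp

lemma invFact_sub_one (z : ℤ) : invFact (z - 1) = (z : ℂ) * invFact z := by
  have := invFact_shift (z - 1)
  simpa using this

lemma invFact_neg {z : ℤ} (h : z < 0) : invFact z = 0 := if_pos h

/-- `f^μ_ν(x) = (x−|ν|)! (x−|μ|+1) / ((x−|ν|−ℓ(ν)+ℓ(μ)+1)! ∏ᵢ (γᵢ−βᵢ)!)`, with the
convention `1/x! = 0` for `x < 0`; here `μ, ν` are partitions given as multisets of
parts, with multiplicities `βᵢ = μ.count i`, `γᵢ = ν.count i`. -/
noncomputable def fmn (μ ν : Multiset ℕ) (x : ℕ) : ℂ :=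
  (Nat.factorial (x - ν.sum) : ℂ) * ((x : ℂ) - (μ.sum : ℂ) + 1) *
    invFact ((x : ℤ) - (ν.sum : ℤ) - (ν.card : ℤ) + (μ.card : ℤ) + 1) *
    ∏ i ∈ (μ.toFinset ∪ ν.toFinset), invFact ((ν.count i : ℤ) - (μ.count i : ℤ))

lemma fmn_eq_zero (μ ν : Multiset ℕ) (x : ℕ) (i : ℕ) (hi : ν.count i < μ.count i) :
    fmn μ ν x = 0 := by
  have himem : i ∈ μ.toFinset ∪ ν.toFinset := by
    apply Finset.mem_union_left
    rw [Multiset.mem_toFinset, ← Multiset.count_pos]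
    omega
  have : invFact ((ν.count i : ℤ) - (μ.count i : ℤ)) = 0 := invFact_neg (by omega)
  rw [fmn, Finset.prod_eq_zero himem this, mul_zero]

open scoped Classical in
/-- `f^μ_ν(x+1) − f^μ_ν(x) = Σⱼ f^{μ∪j}_ν(x)`, the sum over parts `j` occurring in `ν`
(all other terms vanish by the convention). -/
theorem stmt8 (μ ν : Multiset ℕ) (h0μ : (0 : ℕ) ∉ μ) (h0ν : (0 : ℕ) ∉ ν)
    (x : ℕ) (hx : ν.sum ≤ x) :
    fmn μ ν (x + 1) - fmn μ ν x = ∑ j ∈ ν.toFinset, fmn (j ::ₘ μ) ν x := by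
  by_cases hle : ∀ i, μ.count i ≤ ν.count i
  case neg =>
    push_neg at hle
    obtain ⟨i, hi⟩ := hle
    rw [fmn_eq_zero μ ν (x + 1) i hi, fmn_eq_zero μ ν x i hi, sub_zero]
    symm
    apply Finset.sum_eq_zero
    intro j hj
    apply fmn_eq_zero _ _ _ i
    have : μ.count i ≤ (j ::ₘ μ).count i := by
      rcases eq_or_ne i j with rfl | h
      · simp [Multiset.count_cons_self]
      · simp [Multiset.count_cons_of_ne h]
    omega
  case pos =>
    set IB : ℂ := invFact ((x : ℤ) - (ν.sum : ℤ) - (ν.card : ℤ) + (μ.card : ℤ) + 2) with hIB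
    set P : ℂ := ∏ i ∈ ν.toFinset, invFact ((ν.count i : ℤ) - (μ.count i : ℤ)) with hP
    set F : ℂ := (Nat.factorial (x - ν.sum) : ℂ) with hF
    have hsub : μ.toFinset ⊆ ν.toFinset := by
      intro a ha
      rw [Multiset.mem_toFinset, ← Multiset.count_pos] at ha ⊢
      have := hle a; omega
    have hu : μ.toFinset ∪ ν.toFinset = ν.toFinset := Finset.union_eq_right.mpr hsub
    have hc : ((x - ν.sum : ℕ) : ℂ) = (x : ℂ) - (ν.sum : ℂ) := by
      rw [Nat.cast_sub hx]
    -- normal form for fmn μ ν (x+1)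
    have e1 : fmn μ ν (x + 1)
        = ((x : ℂ) - ν.sum + 1) * ((x : ℂ) - μ.sum + 2) * (F * IB * P) := by
      rw [fmn, hu, ← hP]
      have hfac : (x + 1 - ν.sum) = (x - ν.sum) + 1 := by omega
      rw [hfac, Nat.factorial_succ]
      rw [show ((x + 1 : ℕ) : ℤ) - (ν.sum : ℤ) - (ν.card : ℤ) + (μ.card : ℤ) + 1
          = (x : ℤ) - (ν.sum : ℤ) - (ν.card : ℤ) + (μ.card : ℤ) + 2 from by omega, ← hIB]
      rw [Nat.cast_mul, Nat.cast_add, Nat.cast_one, hc, ← hF, Nat.cast_add, Nat.cast_one]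
      ring
    -- normal form for fmn μ ν x
    have e0 : fmn μ ν x
        = ((x : ℂ) - μ.sum + 1) * ((x : ℂ) - ν.sum - ν.card + μ.card + 2)
          * (F * IB * P) := by
      rw [fmn, hu, ← hP, ← hF]
      rw [show ((x : ℕ) : ℤ) - (ν.sum : ℤ) - (ν.card : ℤ) + (μ.card : ℤ) + 1
          = ((x : ℤ) - (ν.sum : ℤ) - (ν.card : ℤ) + (μ.card : ℤ) + 2) - 1 from by omega]
      rw [invFact_sub_one, ← hIB]
      rw [show (((x : ℤ) - (ν.sum : ℤ) - (ν.card : ℤ) + (μ.card : ℤ) + 2 : ℤ) : ℂ)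
          = (x : ℂ) - ν.sum - ν.card + μ.card + 2 from by
        rw [Int.cast_add, Int.cast_add, Int.cast_sub, Int.cast_sub, Int.cast_natCast,
          Int.cast_natCast, Int.cast_natCast, Int.cast_natCast]; norm_num]
      ring
    -- normal form for summands
    have key : ∀ j ∈ ν.toFinset, fmn (j ::ₘ μ) ν x
        = (((ν.count j : ℂ) - (μ.count j : ℂ)) * ((x : ℂ) - μ.sum - j + 1))
          * (F * IB * P) := by
      intro j hj
      rw [fmn]
      have huj : (j ::ₘ μ).toFinset ∪ ν.toFinset = ν.toFinset := by
        rw [Multiset.toFinset_cons, Finset.insert_union, hu, Finset.insert_eq_self.mpr hj]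
      rw [huj, ← hF]
      rw [show ((x : ℕ) : ℤ) - (ν.sum : ℤ) - (ν.card : ℤ) + ((j ::ₘ μ).card : ℤ) + 1
          = (x : ℤ) - (ν.sum : ℤ) - (ν.card : ℤ) + (μ.card : ℤ) + 2 from by
        rw [Multiset.card_cons]; push_cast; ring, ← hIB]
      -- the product over ν.toFinset
      rw [← Finset.mul_prod_erase _ _ hj] at *
      have hprod : (∏ i ∈ ν.toFinset.erase j,
            invFact ((ν.count i : ℤ) - ((j ::ₘ μ).count i : ℤ)))
          = ∏ i ∈ ν.toFinset.erase j, invFact ((ν.count i : ℤ) - (μ.count i : ℤ)) :=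
        Finset.prod_congr rfl fun i hi => by
          rw [Multiset.count_cons_of_ne (Finset.ne_of_mem_erase hi)]
      rw [hprod, Multiset.count_cons_self]
      rw [show (ν.count j : ℤ) - ((μ.count j + 1 : ℕ) : ℤ)
          = ((ν.count j : ℤ) - (μ.count j : ℤ)) - 1 from by push_cast; ring]
      rw [invFact_sub_one, Int.cast_sub, Int.cast_natCast, Int.cast_natCast]
      rw [Multiset.sum_cons, Nat.cast_add, hP]
      ring
    -- sum identities
    have h1 : (∑ j ∈ ν.toFinset, (ν.count j : ℂ)) = (Multiset.card ν : ℂ) := by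
      exact_mod_cast congrArg (Nat.cast : ℕ → ℂ) (Multiset.toFinset_sum_count_eq ν)
    have h2 : (∑ j ∈ ν.toFinset, (ν.count j : ℂ) * (j : ℂ)) = (ν.sum : ℂ) := by
      calc ∑ j ∈ ν.toFinset, (ν.count j : ℂ) * (j : ℂ)
          = ∑ j ∈ ν.toFinset, ν.count j • ((j : ℕ) : ℂ) := by
            simp [nsmul_eq_mul]
        _ = (ν.map fun a => ((a : ℕ) : ℂ)).sum := (Finset.sum_multiset_map_count _ _).symm
        _ = (ν.sum : ℂ) := by rw [Nat.cast_multiset_sum]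
    have hmem : ∀ a ∈ μ, a ∈ ν.toFinset := by
      intro a ha
      rw [Multiset.mem_toFinset, ← Multiset.count_pos]
      have h1 := hle a
      have h2 := Multiset.count_pos.mpr ha
      omega
    have h3 : (∑ j ∈ ν.toFinset, (μ.count j : ℂ)) = (Multiset.card μ : ℂ) := by
      exact_mod_cast congrArg (Nat.cast : ℕ → ℂ) (Multiset.sum_count_eq_card hmem)
    have h4 : (∑ j ∈ ν.toFinset, (μ.count j : ℂ) * (j : ℂ)) = (μ.sum : ℂ) := by
      rw [← Finset.sum_subset hsub (fun a _ ha => by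
        rw [Multiset.count_eq_zero_of_notMem (by simpa [Multiset.mem_toFinset] using ha)]
        simp)]
      calc ∑ j ∈ μ.toFinset, (μ.count j : ℂ) * (j : ℂ)
          = ∑ j ∈ μ.toFinset, μ.count j • ((j : ℕ) : ℂ) := by
            simp [nsmul_eq_mul]
        _ = (μ.map fun a => ((a : ℕ) : ℂ)).sum := (Finset.sum_multiset_map_count _ _).symm
        _ = (μ.sum : ℂ) := by rw [Nat.cast_multiset_sum]
    have hS : (∑ j ∈ ν.toFinset,
          (((ν.count j : ℂ) - (μ.count j : ℂ)) * ((x : ℂ) - μ.sum - j + 1)))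
        = ((x : ℂ) - μ.sum + 1) * ((Multiset.card ν : ℂ) - (Multiset.card μ : ℂ))
          - ((ν.sum : ℂ) - (μ.sum : ℂ)) := by
      have expand : ∀ j ∈ ν.toFinset,
          ((ν.count j : ℂ) - (μ.count j : ℂ)) * ((x : ℂ) - μ.sum - j + 1)
          = (((x : ℂ) - μ.sum + 1) * (ν.count j : ℂ) - (ν.count j : ℂ) * j)
            - (((x : ℂ) - μ.sum + 1) * (μ.count j : ℂ) - (μ.count j : ℂ) * j) :=
        fun j _ => by ring
      rw [Finset.sum_congr rfl expand, Finset.sum_sub_distrib, Finset.sum_sub_distrib,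
        Finset.sum_sub_distrib, ← Finset.mul_sum, ← Finset.mul_sum, h1, h2, h3, h4]
      ring
    rw [e1, e0, Finset.sum_congr rfl key, ← Finset.sum_mul, hS]
    ring
end

section
/- For nonnegative integers n₁, n₂, n₃, ... (finitely many nonzero) with Σᵢ nᵢ > 0: Σ_{0 ≤ mᵢ ≤ nᵢ} (−1)^{Σᵢ mᵢ} · C(Σᵢ (i+1)mᵢ, Σᵢ nᵢ − 1) · ∏ᵢ C(nᵢ, mᵢ) = 0, where C(·,·) denotes binomial coefficients. -/
open Polynomial Finset

/-- For nonnegative integers `n₁,…,n_N` (index `j : Fin N` standing for `i = j+1`) with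
`Σ nᵢ > 0`: `Σ_{0 ≤ mᵢ ≤ nᵢ} (−1)^{Σ mᵢ} C(Σ (i+1)mᵢ, Σ nᵢ − 1) ∏ᵢ C(nᵢ, mᵢ) = 0`. -/
theorem stmt10 (N : ℕ) (n : Fin N → ℕ) (h : 0 < ∑ j, n j) :
    ∑ m ∈ (Finset.univ : Finset (∀ j : Fin N, Fin (n j + 1))),
      ((-1 : ℤ) ^ (∑ j, (m j : ℕ)) *
        (Nat.choose (∑ j, (j.val + 2) * (m j : ℕ)) ((∑ j, n j) - 1) : ℤ) *
        ∏ j, (Nat.choose (n j) (m j) : ℤ)) = 0 := by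
  classical
  set d : ℕ := (∑ j, n j) - 1 with hd
  -- Step 1: the coefficient of degree d in the product vanishes
  have key : (∏ j : Fin N, ((X + 1 : ℤ[X]) ^ (j.val + 2) - 1) ^ (n j)).coeff d = 0 := by
    have hdvd : (X : ℤ[X]) ^ (∑ j, n j) ∣
        ∏ j : Fin N, ((X + 1 : ℤ[X]) ^ (j.val + 2) - 1) ^ (n j) := by
      rw [← Finset.prod_pow_eq_pow_sum]
      refine Finset.prod_dvd_prod_of_dvd _ _ fun j _ => pow_dvd_pow_of_dvd ?_ _
      rw [Polynomial.X_dvd_iff]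
      simp [Polynomial.coeff_X_add_one_pow]
    exact Polynomial.X_pow_dvd_iff.mp hdvd d (by omega)
  -- Step 2: expand the product
  have expand : ∏ j : Fin N, ((X + 1 : ℤ[X]) ^ (j.val + 2) - 1) ^ (n j)
      = ∑ m : (∀ j : Fin N, Fin (n j + 1)),
          Polynomial.C ((-1 : ℤ) ^ ((∑ j, (m j : ℕ)) + ∑ j, n j) * ∏ j, ((n j).choose (m j) : ℤ))
            * (X + 1) ^ (∑ j, (j.val + 2) * (m j : ℕ)) := by
    have hfac : ∀ j : Fin N, ((X + 1 : ℤ[X]) ^ (j.val + 2) - 1) ^ (n j)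
        = ∑ m : Fin (n j + 1),
            Polynomial.C ((-1 : ℤ) ^ ((m : ℕ) + n j) * ((n j).choose (m : ℕ) : ℤ))
              * (X + 1) ^ ((j.val + 2) * (m : ℕ)) := by
      intro j
      rw [sub_pow, Fin.sum_univ_eq_sum_range (fun m => Polynomial.C ((-1 : ℤ) ^ (m + n j) *
        ((n j).choose m : ℤ)) * (X + 1 : ℤ[X]) ^ ((j.val + 2) * m)) (n j + 1)]
      refine Finset.sum_congr rfl fun m _ => ?_
      rw [pow_mul]
      simp only [map_mul, map_pow, map_neg, map_one, one_pow, mul_one, Polynomial.C_eq_natCast]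
      ring
    rw [Finset.prod_congr rfl fun j _ => hfac j, Fintype.prod_sum]
    refine Finset.sum_congr rfl fun m _ => ?_
    rw [Finset.prod_mul_distrib, Finset.prod_pow_eq_pow_sum, ← map_prod]
    congr 2
    rw [Finset.prod_mul_distrib, Finset.prod_pow_eq_pow_sum, Finset.sum_add_distrib]
  -- Step 3: compute the coefficient of the expansion
  rw [expand] at key
  simp only [Polynomial.finset_sum_coeff, Polynomial.coeff_C_mul,
    Polynomial.coeff_X_add_one_pow] at key
  -- Step 4: relate to the goal
  have hgoal : (∑ m ∈ (Finset.univ : Finset (∀ j : Fin N, Fin (n j + 1))),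
      ((-1 : ℤ) ^ (∑ j, (m j : ℕ)) *
        (Nat.choose (∑ j, (j.val + 2) * (m j : ℕ)) d : ℤ) *
        ∏ j, (Nat.choose (n j) (m j) : ℤ)))
      = (-1 : ℤ) ^ (∑ j, n j) *
        ∑ m : (∀ j : Fin N, Fin (n j + 1)),
          ((-1 : ℤ) ^ ((∑ j, (m j : ℕ)) + ∑ j, n j) * ∏ j, ((n j).choose (m j) : ℤ)) *
            ((∑ j, (j.val + 2) * (m j : ℕ)).choose d : ℤ) := by
    rw [Finset.mul_sum]
    refine Finset.sum_congr rfl fun m _ => ?_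
    have hb : ((-1 : ℤ) ^ (∑ j, n j)) * (-1 : ℤ) ^ (∑ j, n j) = 1 := by
      rw [← pow_add, show (∑ j, n j) + (∑ j, n j) = 2 * (∑ j, n j) by ring, pow_mul]
      norm_num
    rw [pow_add]
    linear_combination (-((-1 : ℤ) ^ (∑ j, (m j : ℕ)) *
      ((∑ j, (j.val + 2) * (m j : ℕ)).choose d : ℤ) * ∏ j, ((n j).choose (m j) : ℤ))) * hb
  rw [hgoal, key, mul_zero]
end

section
/- With f^μ_ν(x) = (x−|ν|)!(x−|μ|+1) / ((x−|ν|−ℓ(ν)+ℓ(μ)+1)! ∏ᵢ(γᵢ−βᵢ)!) as above, for partitions μ = (1^{β₁}2^{β₂}...) ⪯ λ = (1^{α₁}2^{α₂}...) and integer k ≥ 0: Σ_{ν: μ⪯ν⪯λ} (−1)^{ℓ(ν)+ℓ(λ)} · f^μ_ν(k+|λ|) · (ℓ(λ)−ℓ(ν)+|λ|−|ν|)! / ( (|λ|−|ν|)! ∏ᵢ (αᵢ−γᵢ)! ) = k! / ( (k−ℓ(λ)+ℓ(μ))! ∏ᵢ (αᵢ−βᵢ)! ), where ν = (1^{γ₁}2^{γ₂}...)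 and the convention 1/x! = 0 for x < 0 is used. -/
open Finset
open scoped Nat

theorem Multiset.sum_le_sum_of_le {M : Type*} [AddCommMonoid M] [PartialOrder M]
    [CanonicallyOrderedAdd M] {s t : Multiset M} (h : s ≤ t) : s.sum ≤ t.sum := by
  obtain ⟨u, rfl⟩ := Multiset.le_iff_exists_add.mp h
  simp

theorem Multiset.toFinset_subset_toFinset_of_le {α : Type*} [DecidableEq α] {s t : Multiset α}
    (h : s ≤ t) : s.toFinset ⊆ t.toFinset :=
  Multiset.toFinset_subset.mpr (Multiset.subset_of_le h)

theorem Multiset.count_powerset {α : Type*} [DecidableEq α] {S : Finset α} (c ρ : Multiset α)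
    (hc : c.toFinset ⊆ S) (hρ : ρ.toFinset ⊆ S) :
    c.powerset.count ρ = ∏ i ∈ S, (c.count i).choose (ρ.count i) := by
  induction c using Multiset.induction_on generalizing ρ with
  | empty =>
    rw [Multiset.powerset_zero, Multiset.count_singleton]
    split_ifs with h
    · simp [h]
    · obtain ⟨a, ha⟩ := Multiset.exists_mem_of_ne_zero h
      exact (Finset.prod_eq_zero (hρ (Multiset.mem_toFinset.mpr ha))
        (Nat.choose_eq_zero_of_lt (by simpa using Multiset.count_pos.mpr ha))).symm
  | cons a c ih =>
    have haS : a ∈ S := hc (by simp)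
    have hcS : c.toFinset ⊆ S := fun x hx => hc (by simp_all)
    have hoff (s : Multiset α) : ∀ i ∈ S.erase a, (a ::ₘ s).count i = s.count i :=
      fun i hi => Multiset.count_cons_of_ne (ne_of_mem_erase hi) s
    have hprod (σ : Multiset α) : ∏ i ∈ S.erase a, ((a ::ₘ c).count i).choose (σ.count i) =
        ∏ i ∈ S.erase a, (c.count i).choose (σ.count i) :=
      prod_congr rfl fun i hi => by rw [hoff c i hi]
    rw [Multiset.powerset_cons, Multiset.count_add, ← mul_prod_erase S _ haS, hprod,
      Multiset.count_cons_self, ih ρ hcS hρ, ← mul_prod_erase S _ haS]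
    by_cases ha : a ∈ ρ
    · obtain ⟨σ, rfl⟩ := Multiset.exists_cons_of_mem ha
      have hσS : σ.toFinset ⊆ S := fun x hx => hρ (by simp_all)
      rw [Multiset.count_map_eq_count' _ _ fun _ _ h => (Multiset.cons_inj_right a).mp h,
        ih σ hcS hσS, ← mul_prod_erase S _ haS, Multiset.count_cons_self, Nat.choose_succ_succ',
        prod_congr rfl fun i hi => by rw [hoff σ i hi]]
      ring
    · have hmap : (c.powerset.map (a ::ₘ ·)).count ρ = 0 := by
        refine Multiset.count_eq_zero.mpr fun h => ha ?_
        obtain ⟨σ, -, rfl⟩ := Multiset.mem_map.mp h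
        exact Multiset.mem_cons_self a σ
      simp [hmap, Multiset.count_eq_zero.mpr ha]

theorem Multiset.count_powerset_mul_prod_factorial {α : Type*} [DecidableEq α] {S : Finset α}
    {c ρ : Multiset α} (hρ : ρ ≤ c) (hc : c.toFinset ⊆ S) :
    c.powerset.count ρ * ∏ i ∈ S, ((ρ.count i)! * (c.count i - ρ.count i)!) =
      ∏ i ∈ S, (c.count i)! := by
  rw [Multiset.count_powerset c ρ hc ((Multiset.toFinset_subset_toFinset_of_le hρ).trans hc),
    ← prod_mul_distrib]
  exact prod_congr rfl fun i _ => by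
    rw [← mul_assoc, Nat.choose_mul_factorial_mul_factorial (Multiset.count_le_of_le i hρ)]

theorem Multiset.sum_powerset_add_filter_le {α M : Type*} [DecidableEq α] [AddCommMonoid M]
    (μ c : Multiset α) [DecidablePred (μ ≤ ·)] (F : Multiset α → M) :
    ∑ ν ∈ (μ + c).powerset.toFinset with μ ≤ ν, F ν = ∑ ρ ∈ c.powerset.toFinset, F (μ + ρ) := by
  have hmem (ν : Multiset α) : ν ∈ {ν ∈ (μ + c).powerset.toFinset | μ ≤ ν} ↔ ν ≤ μ + c ∧ μ ≤ ν := by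
    simp
  refine sum_nbij' (· - μ) (μ + ·) (fun ν hν => ?_) (fun ρ hρ => ?_) (fun ν hν => ?_)
    (fun ρ _ => add_tsub_cancel_left μ ρ) (fun ν hν => ?_)
  · simpa [add_comm] using ((hmem ν).mp hν).1
  · simpa [hmem] using hρ
  · exact add_tsub_cancel_of_le ((hmem ν).mp hν).2
  · rw [add_tsub_cancel_of_le ((hmem ν).mp hν).2]

theorem Multiset.prod_factorial_count_of_toFinset_subset {α : Type*} [DecidableEq α]
    {s : Multiset α} {T : Finset α} (h : s.toFinset ⊆ T) :
    ∏ i ∈ T, (s.count i)! = ∏ i ∈ s.toFinset, (s.count i)! :=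
  (prod_subset h fun i _ hi => by simp [Multiset.count_eq_zero.mpr (by simpa using hi)]).symm

theorem invFact_natCast (n : ℕ) : invFact n = ((n ! : ℕ) : ℂ)⁻¹ := by
  simp [invFact]

theorem invFact_eq_mul_invFact_add_one (w : ℤ) : invFact w = (w + 1) * invFact (w + 1) := by
  rcases lt_or_ge w 0 with hw | hw
  · rcases eq_or_lt_of_le (Int.le_sub_one_of_lt hw) with rfl | hw'
    · simp [invFact]
    · simp [invFact, hw, show w + 1 < 0 by omega]
  · lift w to ℕ using hw
    rw [show (w : ℤ) + 1 = (w + 1 : ℕ) by push_cast; ring, invFact_natCast, invFact_natCast,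
      Nat.factorial_succ]
    push_cast
    field_simp

theorem factorial_mul_invFact_sub (k m : ℕ) :
    (k ! : ℂ) * invFact (k - m) = k.descFactorial m := by
  rcases le_or_gt m k with h | h
  · rw [← Nat.factorial_mul_descFactorial h, show (k : ℤ) - m = (k - m : ℕ) by omega,
      invFact_natCast]
    push_cast
    field_simp [Nat.factorial_ne_zero]
  · rw [invFact, if_pos (by omega), Nat.descFactorial_eq_zero_iff_lt.mpr h]
    simp

theorem Nat.cast_sub_mul_descFactorial {R : Type*} [Ring R] (k m : ℕ) :
    ((k : R) - m) * k.descFactorial m = k.descFactorial (m + 1) := by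
  rcases le_or_gt m k with h | h
  · rw [Nat.descFactorial_succ, Nat.cast_mul, Nat.cast_sub h]
  · simp [Nat.descFactorial_eq_zero_iff_lt.mpr h]

theorem Nat.mul_descFactorial_pred (k m : ℕ) :
    k * (k - 1).descFactorial m = k.descFactorial (m + 1) := by
  cases k with
  | zero => simp
  | succ n => rw [Nat.succ_descFactorial_succ, Nat.add_sub_cancel]

noncomputable def gTerm (m k u d : ℕ) : ℂ :=
  (k + u)! * (m + u - d)! * invFact (k + u - d + 1) / u !

theorem gTerm_succ_sub_gTerm (m k u d : ℕ) (hd : d ≤ m + u) :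
    gTerm (m + 1) k u (d + 1) - gTerm (m + 1) k u d = (k - m) * gTerm m k u d := by
  unfold gTerm
  rw [show m + 1 + u - (d + 1) = m + u - d by omega,
    show m + 1 + u - d = m + u - d + 1 by omega, Nat.factorial_succ,
    show (k : ℤ) + u - (d + 1 : ℕ) + 1 = k + u - d by push_cast; ring,
    invFact_eq_mul_invFact_add_one ((k : ℤ) + u - d)]
  push_cast [Nat.cast_sub hd]
  ring

theorem gTerm_succ_succ (m k v d : ℕ) (hd : d ≤ m + v) :
    gTerm (m + 1) k (v + 1) (d + 1) = gTerm (m + 1) k v d + k * gTerm m (k - 1) (v + 1) d := by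
  unfold gTerm
  rw [show m + 1 + (v + 1) - (d + 1) = m + v - d + 1 by omega,
    show m + 1 + v - d = m + v - d + 1 by omega,
    show (k : ℤ) + (v + 1 : ℕ) - (d + 1 : ℕ) + 1 = k + v - d + 1 by push_cast; ring,
    Nat.factorial_succ v]
  cases k with
  | zero =>
    simp only [zero_add, Nat.factorial_succ, Nat.cast_mul, Nat.cast_add, Nat.cast_one,
      CharP.cast_eq_zero, zero_tsub, zero_mul, add_zero]
    field_simp
  | succ k =>
    rw [Nat.add_sub_cancel, show k + 1 + (v + 1) = k + v + 1 + 1 by omega,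
      show m + (v + 1) - d = m + v - d + 1 by omega,
      show (k : ℤ) + (v + 1 : ℕ) - d + 1 = (k + 1 : ℕ) + v - d + 1 by push_cast; ring,
      show k + 1 + v = k + v + 1 by omega, show k + (v + 1) = k + v + 1 by omega,
      Nat.factorial_succ (k + v + 1)]
    push_cast
    field_simp
    ring

theorem gTerm_sub_gTerm (i u m k d : ℕ) (hi : i ≤ u) (hd : d ≤ m) :
    gTerm (m + 1) k (u - i) (d + 1) - gTerm (m + 1) k u d =
      (k - m) * ∑ t ∈ range (i + 1), gTerm m k (u - t) d
        - k * ∑ t ∈ range i, gTerm m (k - 1) (u - t) d := by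
  induction i with
  | zero => simpa using gTerm_succ_sub_gTerm m k u d (by omega)
  | succ i ih =>
    have hstep := gTerm_succ_succ m k (u - (i + 1)) d (by omega)
    rw [show u - (i + 1) + 1 = u - i by omega] at hstep
    rw [sum_range_succ, sum_range_succ (fun t => gTerm m (k - 1) (u - t) d) i]
    linear_combination ih (by omega) + gTerm_succ_sub_gTerm m k (u - (i + 1)) d (by omega) - hstep

noncomputable def gSum (c : Multiset ℕ) (k T : ℕ) : ℂ :=
  (c.powerset.map fun ρ => (-1) ^ ρ.card * gTerm c.card k (T - ρ.sum) ρ.card).sum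

theorem gSum_zero (k T : ℕ) : gSum 0 k T = ((k + T + 1 : ℕ) : ℂ)⁻¹ := by
  simp only [gSum, gTerm, Multiset.powerset_zero, Multiset.map_singleton, Multiset.sum_singleton,
    Multiset.card_zero, Multiset.sum_zero, pow_zero, one_mul, Nat.sub_zero, zero_add]
  rw [show (k : ℤ) + T - (0 : ℕ) + 1 = (k + T + 1 : ℕ) by push_cast; ring, invFact_natCast,
    Nat.factorial_succ]
  push_cast
  field_simp [Nat.factorial_ne_zero]

theorem gSum_cons (i : ℕ) (c : Multiset ℕ) (k T : ℕ) (hT : (i ::ₘ c).sum ≤ T) :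
    gSum (i ::ₘ c) k T =
      -((k - c.card) * ∑ t ∈ range (i + 1), gSum c k (T - t))
        + k * ∑ t ∈ range i, gSum c (k - 1) (T - t) := by
  have hterm : ∀ ρ ∈ c.powerset,
      (-1) ^ ρ.card * gTerm (c.card + 1) k (T - ρ.sum) ρ.card
        + (-1) ^ (ρ.card + 1) * gTerm (c.card + 1) k (T - (i + ρ.sum)) (ρ.card + 1)
      = -((k - c.card) * ∑ t ∈ range (i + 1), (-1) ^ ρ.card * gTerm c.card k (T - t - ρ.sum) ρ.card)
        + k * ∑ t ∈ range i, (-1) ^ ρ.card * gTerm c.card (k - 1) (T - t - ρ.sum) ρ.card := by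
    intro ρ hρ
    rw [Multiset.mem_powerset] at hρ
    have hsum := Multiset.sum_le_sum_of_le hρ
    rw [Multiset.sum_cons] at hT
    simp only [← mul_sum, Nat.sub_right_comm T _ ρ.sum,
      show T - (i + ρ.sum) = T - ρ.sum - i by omega]
    linear_combination (-(-1) ^ ρ.card : ℂ) *
      gTerm_sub_gTerm i (T - ρ.sum) c.card k ρ.card (by omega) (Multiset.card_le_card hρ)
  simp only [gSum, Multiset.card_cons, Multiset.powerset_cons, Multiset.map_add, Multiset.sum_add,
    Multiset.map_map, Function.comp_def, Multiset.sum_cons]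
  rw [← Multiset.sum_map_add, Multiset.map_congr rfl hterm, Multiset.sum_map_add,
    Multiset.sum_map_neg, Multiset.sum_map_mul_left, Multiset.sum_map_mul_left]
  simp only [Finset.sum_eq_multiset_sum, Multiset.sum_map_sum_map c.powerset]

theorem gSum_eq (c : Multiset ℕ) (k T : ℕ) (hT : c.sum ≤ T) :
    gSum c k T = (-1) ^ c.card * k.descFactorial c.card * ((k + T + 1 : ℕ) : ℂ)⁻¹ := by
  induction c using Multiset.induction_on generalizing k T with
  | empty => simp [gSum_zero]
  | cons i c ih =>
    rw [Multiset.sum_cons] at hT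
    have hk : ∀ t ∈ range (i + 1), gSum c k (T - t) =
        (-1) ^ c.card * k.descFactorial c.card * ((k + (T - t) + 1 : ℕ) : ℂ)⁻¹ :=
      fun t ht => ih k (T - t) (by have := mem_range.mp ht; omega)
    have hk1 : k * ∑ t ∈ range i, gSum c (k - 1) (T - t) =
        (-1) ^ c.card * k.descFactorial (c.card + 1) *
          ∑ t ∈ range i, ((k + (T - (t + 1)) + 1 : ℕ) : ℂ)⁻¹ := by
      rw [mul_sum, mul_sum]
      refine sum_congr rfl fun t ht => ?_
      have ht : t < i := mem_range.mp ht
      rw [ih (k - 1) (T - t) (by omega), ← Nat.mul_descFactorial_pred]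
      -- at `k = 0` both sides vanish, so the truncated `k - 1` does no harm
      cases k with
      | zero => simp
      | succ k =>
        rw [Nat.add_sub_cancel, show k + (T - t) + 1 = k + 1 + (T - (t + 1)) + 1 by omega]
        push_cast
        ring
    rw [gSum_cons i c k T (by rw [Multiset.sum_cons]; exact hT), hk1, sum_congr rfl hk, ← mul_sum,
      sum_range_succ' (fun t => ((k + (T - t) + 1 : ℕ) : ℂ)⁻¹), Nat.sub_zero, Multiset.card_cons]
    linear_combination (-(-1) ^ c.card * (∑ t ∈ range i, ((k + (T - (t + 1)) + 1 : ℕ) : ℂ)⁻¹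
      + ((k + T + 1 : ℕ) : ℂ)⁻¹)) * Nat.cast_sub_mul_descFactorial (R := ℂ) k c.card

theorem fmn_add_right (μ ρ : Multiset ℕ) (x : ℕ) :
    fmn μ (μ + ρ) x = (x - (μ + ρ).sum)! * ((x : ℂ) - μ.sum + 1) *
      invFact ((x : ℤ) - (μ + ρ).sum - ρ.card + 1) *
        ((∏ i ∈ ρ.toFinset, (ρ.count i)! : ℕ) : ℂ)⁻¹ := by
  have hsub : ρ.toFinset ⊆ μ.toFinset ∪ (μ + ρ).toFinset :=
    subset_union_right.trans' (Multiset.toFinset_subset_toFinset_of_le (by simp))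
  have hprod : ∏ i ∈ μ.toFinset ∪ (μ + ρ).toFinset, invFact (((μ + ρ).count i : ℤ) - μ.count i) =
      ((∏ i ∈ ρ.toFinset, (ρ.count i)! : ℕ) : ℂ)⁻¹ := by
    rw [← Multiset.prod_factorial_count_of_toFinset_subset hsub]
    simp [Multiset.count_add, invFact_natCast]
  rw [fmn, hprod, Multiset.card_add, Nat.cast_add]
  congr 3
  ring

theorem summand_eq_count_mul_gTerm (k : ℕ) (μ c ρ : Multiset ℕ) (hρ : ρ ≤ c) :
    (-1 : ℂ) ^ ((μ + ρ).card + (μ + c).card) * fmn μ (μ + ρ) (k + (μ + c).sum) *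
        (Nat.factorial ((μ + c).card - (μ + ρ).card + ((μ + c).sum - (μ + ρ).sum)) : ℂ) /
      ((Nat.factorial ((μ + c).sum - (μ + ρ).sum) : ℂ) *
        ∏ i ∈ (μ + c).toFinset, (Nat.factorial ((μ + c).count i - (μ + ρ).count i) : ℂ)) =
    c.powerset.count ρ * ((-1) ^ ρ.card * gTerm c.card k (c.sum - ρ.sum) ρ.card) *
      ((-1) ^ c.card * (k + c.sum + 1) / ((∏ i ∈ (μ + c).toFinset, (c.count i)! : ℕ) : ℂ)) := by
  have hcS : c.toFinset ⊆ (μ + c).toFinset := Multiset.toFinset_subset_toFinset_of_le (by simp)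
  have hweight := Multiset.count_powerset_mul_prod_factorial hρ hcS
  rw [fmn_add_right, ← Multiset.prod_factorial_count_of_toFinset_subset
    (hcS.trans' (Multiset.toFinset_subset_toFinset_of_le hρ))]
  obtain ⟨e, rfl⟩ := Multiset.le_iff_exists_add.mp hρ
  simp only [Multiset.card_add, Multiset.sum_add, Multiset.count_add, Nat.add_sub_add_left,
    add_tsub_cancel_left, prod_mul_distrib] at hweight ⊢
  have hsign : (-1 : ℂ) ^ (μ.card + ρ.card + (μ.card + (ρ.card + e.card))) =
      (-1) ^ ρ.card * (-1) ^ (ρ.card + e.card) := by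
    rw [show μ.card + ρ.card + (μ.card + (ρ.card + e.card)) =
      2 * μ.card + (ρ.card + (ρ.card + e.card)) by ring, pow_add, pow_mul, pow_add]
    simp
  rw [hsign, ← hweight, gTerm,
    show k + (μ.sum + (ρ.sum + e.sum)) - (μ.sum + ρ.sum) = k + e.sum by omega,
    show ρ.card + e.card + e.sum - ρ.card = e.card + e.sum by omega,
    show ((k + (μ.sum + (ρ.sum + e.sum)) : ℕ) : ℤ) - (μ.sum + ρ.sum : ℕ) - ρ.card + 1 =
      k + e.sum - ρ.card + 1 by push_cast; ring]
  push_cast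
  field_simp
  ring

open scoped Classical in
theorem stmt12_general (k : ℕ) (lam μ : Multiset ℕ) (hμ : μ ≤ lam) :
    ∑ ν ∈ lam.powerset.toFinset,
      (if μ ≤ ν then
        (-1 : ℂ) ^ (ν.card + lam.card) * fmn μ ν (k + lam.sum) *
          (Nat.factorial (lam.card - ν.card + (lam.sum - ν.sum)) : ℂ) /
          ((Nat.factorial (lam.sum - ν.sum) : ℂ) *
            ∏ i ∈ lam.toFinset, (Nat.factorial (lam.count i - ν.count i) : ℂ))
      else 0) =
    (Nat.factorial k : ℂ) * invFact ((k : ℤ) - (lam.card : ℤ) + (μ.card : ℤ)) /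
      ∏ i ∈ lam.toFinset, (Nat.factorial (lam.count i - μ.count i) : ℂ) := by
  obtain ⟨c, rfl⟩ := Multiset.le_iff_exists_add.mp hμ
  have hgSum : ∑ ρ ∈ c.powerset.toFinset,
      (c.powerset.count ρ : ℂ) * ((-1) ^ ρ.card * gTerm c.card k (c.sum - ρ.sum) ρ.card) =
        gSum c k c.sum := by
    simp only [gSum, sum_multiset_map_count, nsmul_eq_mul]
  rw [← sum_filter, Multiset.sum_powerset_add_filter_le,
    sum_congr rfl fun ρ hρ => summand_eq_count_mul_gTerm k μ c ρ (by simpa using hρ),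
    ← sum_mul, hgSum,
    gSum_eq c k c.sum le_rfl, Multiset.card_add,
    show (k : ℤ) - (μ.card + c.card : ℕ) + μ.card = k - c.card by push_cast; ring,
    factorial_mul_invFact_sub]
  simp only [Multiset.count_add, add_tsub_cancel_left]
  have hne : (k : ℂ) + c.sum + 1 ≠ 0 := by exact_mod_cast Nat.succ_ne_zero (k + c.sum)
  simp only [Nat.cast_prod, Nat.cast_add, Nat.cast_one]
  field_simp
  rw [← pow_mul, Even.neg_one_pow ⟨c.card, by ring⟩, one_mul]

open scoped Classical in
/-- For partitions `μ ⪯ λ` and `k ≥ 0`: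
`Σ_{μ⪯ν⪯λ} (−1)^{ℓ(ν)+ℓ(λ)} f^μ_ν(k+|λ|) (ℓ(λ)−ℓ(ν)+|λ|−|ν|)! / ((|λ|−|ν|)! ∏ᵢ(αᵢ−γᵢ)!)
= k! / ((k−ℓ(λ)+ℓ(μ))! ∏ᵢ(αᵢ−βᵢ)!)`, with the convention `1/x! = 0` for `x < 0`. -/
theorem stmt12 (k : ℕ) (lam μ : Multiset ℕ) (h0 : (0 : ℕ) ∉ lam) (hμ : μ ≤ lam) :
    ∑ ν ∈ lam.powerset.toFinset,
      (if μ ≤ ν then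
        (-1 : ℂ) ^ (ν.card + lam.card) * fmn μ ν (k + lam.sum) *
          (Nat.factorial (lam.card - ν.card + (lam.sum - ν.sum)) : ℂ) /
          ((Nat.factorial (lam.sum - ν.sum) : ℂ) *
            ∏ i ∈ lam.toFinset, (Nat.factorial (lam.count i - ν.count i) : ℂ))
      else 0) =
    (Nat.factorial k : ℂ) * invFact ((k : ℤ) - (lam.card : ℤ) + (μ.card : ℤ)) /
      ∏ i ∈ lam.toFinset, (Nat.factorial (lam.count i - μ.count i) : ℂ) :=
  stmt12_general k lam μ hμ
end
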